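/- Let ε ∈ ℝ, Δτ > 0, and assume the linear instability condition: ε < 0 or ε > 2/(π(Δτ)²). Let θ ∈ ℝ with cos θ ≠ 0, and let a = (a₁, a₂) ∈ ℝ² with a₁·a₂ > 0. Then the image b = Ĵ(θ)·a satisfies b₁·b₂ > 0; i.e., the Jacobian of T̂_{ε,Δτ} maps the positive-slope cone {a : a₁/a₂ > 0} into itself. -/
import Mathlib


/-- The action of the Jacobian `Ĵ(θ)` of the map `T̂_{ε,Δτ}` on a vector of `ℝ²`. -/
noncomputable def JhatApply (ε Δτ θ : ℝ) (a : ℝ × ℝ) : ℝ × ℝ :=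
  ((1 - Real.pi * ε * Δτ ^ 2 / Real.cos θ ^ 2) * a.1
      + (-(2 * Real.pi * ε * Δτ) / Real.cos θ ^ 2) * a.2,
   Δτ * (1 - Real.pi * ε * Δτ ^ 2 / (2 * Real.cos θ ^ 2)) * a.1
      + (1 - Real.pi * ε * Δτ ^ 2 / Real.cos θ ^ 2) * a.2)

/-- Under the linear instability condition (with `Δτ > 0`), the Jacobian of
`T̂_{ε,Δτ}` maps the positive-slope cone `{a : a₁·a₂ > 0}` into itself. -/
theorem Jhat_positive_cone_invariant (ε Δτ : ℝ) (hΔτ : Δτ > 0)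
    (hli : ε < 0 ∨ ε > 2 / (Real.pi * Δτ ^ 2))
    (θ : ℝ) (hθ : Real.cos θ ≠ 0)
    (a : ℝ × ℝ) (ha : a.1 * a.2 > 0) :
    (JhatApply ε Δτ θ a).1 * (JhatApply ε Δτ θ a).2 > 0 := by
  have hc : (0:ℝ) < Real.cos θ ^ 2 := by positivity
  have hc1 : Real.cos θ ^ 2 ≤ 1 := by
    have := Real.neg_one_le_cos θ
    have := Real.cos_le_one θ
    nlinarith
  have hπ : (0:ℝ) < Real.pi := Real.pi_pos
  set k : ℝ := Real.pi * ε * Δτ ^ 2 / Real.cos θ ^ 2 with hkdef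
  have hk : k < 0 ∨ 2 < k := by
    rcases hli with h | h
    · left
      apply div_neg_of_neg_of_pos _ hc
      nlinarith [mul_pos hπ (pow_pos hΔτ 2)]
    · right
      have h2 : 2 < Real.pi * ε * Δτ ^ 2 := by
        rw [gt_iff_lt, div_lt_iff₀ (by positivity)] at h
        nlinarith
      rw [hkdef, lt_div_iff₀ hc]
      nlinarith
  set x := a.1
  set y := a.2
  have hΔτ' : Δτ ≠ 0 := ne_of_gt hΔτ
  have key : (JhatApply ε Δτ θ a).1 * (JhatApply ε Δτ θ a).2 =
      ((1 - k) * Δτ * (1 - k / 2)) * x ^ 2 + (2 * k ^ 2 - 4 * k + 1) * (x * y)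
        + ((2 * k / Δτ) * (k - 1)) * y ^ 2 := by
    simp only [JhatApply, hkdef]
    field_simp
    ring
  rw [key]
  have hx2 : 0 ≤ x ^ 2 := sq_nonneg x
  have hy2 : 0 ≤ y ^ 2 := sq_nonneg y
  rcases hk with h | h
  · have hA : 0 < (1 - k) * Δτ * (1 - k / 2) := by nlinarith
    have hB : 0 < 2 * k ^ 2 - 4 * k + 1 := by nlinarith
    have hC : 0 < (2 * k / Δτ) * (k - 1) := by
      apply mul_pos_of_neg_of_neg
      · exact div_neg_of_neg_of_pos (by linarith) hΔτ
      · linarith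
    have t1 := mul_nonneg hA.le hx2
    have t2 := mul_pos hB ha
    have t3 := mul_nonneg hC.le hy2
    linarith
  · have hA : 0 < (1 - k) * Δτ * (1 - k / 2) := by
      nlinarith [mul_pos_of_neg_of_neg (show 1 - k < 0 by linarith)
        (show 1 - k / 2 < 0 by linarith), hΔτ]
    have hB : 0 < 2 * k ^ 2 - 4 * k + 1 := by nlinarith
    have hC : 0 < (2 * k / Δτ) * (k - 1) := by
      apply mul_pos (div_pos (by linarith) hΔτ)
      linarith
    have t1 := mul_nonneg hA.le hx2
    have t2 := mul_pos hB ha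
    have t3 := mul_nonneg hC.le hy2
    linarith
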